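/- arXiv:2403.08805 — 10 statements merged into one kernel-verified Lean document; each statement's English description precedes it below -/
import Mathlib

section
/- For every fixed α > 0 with α ≠ 1, the Rényi entropy of the Poisson distribution, H_R^α(λ) = (1/(1-α)) · log( e^{-αλ} · ∑_{k=0}^∞ λ^{kα}/(k!)^α ), is a strictly increasing function of λ on (0, +∞). -/
/-!
Write `p(l)` for the Poisson weights. For `l < l'`, `p(l')` is the convolution of `p(l' - l)`
with `p(l)`, so each `p_n(l')` is an average of the values `p_{n-j}(l)` against the weights
`p_j(l' - l)` of total mass at most one. For a strictly convex `f` with `f 0 ≤ 0`, Jensen's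
inequality with the missing mass placed at `0` gives `∑ f (p_n(l')) < ∑ f (p_n(l))`, strictly
already at `n = 0`. Taking `f = x ^ α` for `α > 1` and `f = -x ^ α` for `α < 1`, the sum
`∑ p_n(l) ^ α` decreases, resp. increases, in `l`, and the sign of `1 / (1 - α)` makes the
entropy increase in both cases.
-/

open Real Finset Filter Set Nat

section Jensen

variable {𝕜 E β ι : Type*} [Field 𝕜] [LinearOrder 𝕜] [IsStrictOrderedRing 𝕜]
  [AddCommGroup E] [AddCommGroup β] [PartialOrder β] [IsOrderedAddMonoid β] [Module 𝕜 E]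
  [Module 𝕜 β] [IsStrictOrderedModule 𝕜 β] {s : Set E} {f : E → β}

theorem ConvexOn.map_sum_le_of_sum_le_one (hf : ConvexOn 𝕜 s f) (hs₀ : (0 : E) ∈ s)
    (hf₀ : f 0 ≤ 0) {t : Finset ι} {w : ι → 𝕜} {p : ι → E} (hw₀ : ∀ i ∈ t, 0 ≤ w i)
    (hw₁ : ∑ i ∈ t, w i ≤ 1) (hp : ∀ i ∈ t, p i ∈ s) :
    f (∑ i ∈ t, w i • p i) ≤ ∑ i ∈ t, w i • f (p i) := by
  set W := ∑ i ∈ t, w i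
  rcases (sum_nonneg hw₀).eq_or_lt with hW | hW
  · have hw : ∀ i ∈ t, w i = 0 := (sum_eq_zero_iff_of_nonneg hw₀).1 hW.symm
    rwa [sum_eq_zero fun i hi => by rw [hw i hi, zero_smul],
      sum_eq_zero fun i hi => by rw [hw i hi, zero_smul]]
  · have hsum_eq : ∑ i ∈ t, w i • p i = W • t.centerMass w p := by
      rw [centerMass, smul_smul, mul_inv_cancel₀ hW.ne', one_smul]
    have hsum_eq' : ∑ i ∈ t, w i • f (p i) = W • t.centerMass w (f ∘ p) := by
      rw [centerMass, smul_smul, mul_inv_cancel₀ hW.ne', one_smul]; rfl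
    calc f (∑ i ∈ t, w i • p i) = f (W • t.centerMass w p + (1 - W) • 0) := by
          rw [hsum_eq, smul_zero, add_zero]
      _ ≤ W • f (t.centerMass w p) + (1 - W) • f 0 :=
          hf.2 (hf.1.centerMass_mem hw₀ hW hp) hs₀ hW.le (sub_nonneg.2 hw₁) (by ring)
      _ ≤ W • f (t.centerMass w p) :=
          add_le_of_nonpos_right (smul_nonpos_of_nonneg_of_nonpos (sub_nonneg.2 hw₁) hf₀)
      _ ≤ W • t.centerMass w (f ∘ p) :=
          smul_le_smul_of_nonneg_left (hf.map_centerMass_le hw₀ hW hp) hW.le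
      _ = ∑ i ∈ t, w i • f (p i) := hsum_eq'.symm

theorem StrictConvexOn.map_smul_lt (hf : StrictConvexOn 𝕜 s f) (hs₀ : (0 : E) ∈ s)
    (hf₀ : f 0 ≤ 0) {x : E} (hx : x ∈ s) (hx₀ : x ≠ 0) {a : 𝕜} (ha₀ : 0 < a) (ha₁ : a < 1) :
    f (a • x) < a • f x :=
  calc f (a • x) = f (a • x + (1 - a) • 0) := by rw [smul_zero, add_zero]
    _ < a • f x + (1 - a) • f 0 := hf.2 hx hs₀ hx₀ ha₀ (sub_pos.2 ha₁) (by ring)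
    _ ≤ a • f x :=
        add_le_of_nonpos_right (smul_nonpos_of_nonneg_of_nonpos (sub_pos.2 ha₁).le hf₀)

end Jensen

noncomputable def poissonProb (l : ℝ) (k : ℕ) : ℝ := l ^ k * exp (-l) / k !

theorem poissonProb_nonneg {l : ℝ} (hl : 0 ≤ l) (k : ℕ) : 0 ≤ poissonProb l k := by
  unfold poissonProb; positivity

theorem poissonProb_pos {l : ℝ} (hl : 0 < l) (k : ℕ) : 0 < poissonProb l k := by
  unfold poissonProb; positivity

theorem poissonProb_zero (l : ℝ) : poissonProb l 0 = exp (-l) := by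
  simp [poissonProb]

theorem poissonProb_succ (l : ℝ) (k : ℕ) :
    poissonProb l (k + 1) = poissonProb l k * (l / (k + 1)) := by
  simp only [poissonProb, factorial_succ, cast_mul, cast_succ, pow_succ]
  field_simp

theorem hasSum_poissonProb (l : ℝ) : HasSum (poissonProb l) 1 := by
  have h := (NormedSpace.expSeries_div_hasSum_exp l).mul_left (exp (-l))
  rw [← Real.exp_eq_exp_ℝ, ← Real.exp_add, neg_add_cancel, Real.exp_zero] at h
  have hP : poissonProb l = fun k => exp (-l) * (l ^ k / k !) :=
    funext fun k => by unfold poissonProb; ring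
  rwa [hP]

theorem poissonProb_add (x y : ℝ) (n : ℕ) :
    poissonProb (x + y) n = ∑ j ∈ range (n + 1), poissonProb x j * poissonProb y (n - j) := by
  rw [poissonProb, add_pow, sum_mul, sum_div]
  refine sum_congr rfl fun j hj => ?_
  rw [cast_choose ℝ (Nat.lt_succ_iff.mp (mem_range.mp hj)), neg_add, Real.exp_add,
    poissonProb, poissonProb]
  field_simp

theorem summable_poissonProb_rpow {l α : ℝ} (hl : 0 < l) (hα : 0 < α) :
    Summable fun k => poissonProb l k ^ α := by
  refine summable_of_ratio_test_tendsto_lt_one zero_lt_one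
    (Eventually.of_forall fun k => (rpow_pos_of_pos (poissonProb_pos hl k) α).ne') ?_
  have hratio (k : ℕ) :
      ‖poissonProb l (k + 1) ^ α‖ / ‖poissonProb l k ^ α‖ = (l / (k + 1)) ^ α := by
    have hk := rpow_pos_of_pos (poissonProb_pos hl k) α
    rw [norm_of_nonneg hk.le, norm_of_nonneg (rpow_nonneg (poissonProb_nonneg hl.le _) α),
      poissonProb_succ, mul_rpow (poissonProb_nonneg hl.le k) (by positivity),
      mul_div_cancel_left₀ _ hk.ne']
  have hlim : Tendsto (fun k : ℕ => l / ((k : ℝ) + 1)) atTop (nhds 0) := by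
    simpa [Function.comp_def] using
      (tendsto_const_div_atTop_nhds_zero_nat l).comp (tendsto_add_atTop_nat 1)
  simpa only [hratio, zero_rpow hα.ne'] using hlim.rpow_const (Or.inr hα.le)

theorem tsum_poissonProb_rpow_pos {l α : ℝ} (hl : 0 < l) (hα : 0 < α) :
    0 < ∑' k, poissonProb l k ^ α :=
  (summable_poissonProb_rpow hl hα).tsum_pos
    (fun k => rpow_nonneg (poissonProb_nonneg hl.le k) α) 0
    (rpow_pos_of_pos (poissonProb_pos hl 0) α)

theorem tsum_comp_poissonProb_lt_of_lt {f : ℝ → ℝ} (hf : StrictConvexOn ℝ (Ici 0) f)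
    (hf₀ : f 0 ≤ 0) {l l' : ℝ} (hl : 0 ≤ l) (hll' : l < l')
    (hsum : Summable fun n => ‖f (poissonProb l n)‖)
    (hsum' : Summable fun n => f (poissonProb l' n)) :
    ∑' n, f (poissonProb l' n) < ∑' n, f (poissonProb l n) := by
  set s := l' - l
  have hs : 0 < s := sub_pos.2 hll'
  have hl' : l' = s + l := by ring
  set g : ℕ → ℝ := fun n => ∑ j ∈ range (n + 1), poissonProb s j * f (poissonProb l (n - j))
  have hPs : Summable fun j => ‖poissonProb s j‖ :=
    (hasSum_poissonProb s).summable.congr fun j =>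
      (norm_of_nonneg (poissonProb_nonneg hs.le j)).symm
  have hg : Summable g := (summable_norm_sum_mul_range_of_summable_norm hPs hsum).of_norm
  have htsum_g : ∑' n, g n = ∑' n, f (poissonProb l n) := by
    rw [← tsum_mul_tsum_eq_tsum_sum_range_of_summable_norm hPs hsum,
      (hasSum_poissonProb s).tsum_eq, one_mul]
  have hle (n : ℕ) : f (poissonProb l' n) ≤ g n := by
    simpa only [hl', poissonProb_add, smul_eq_mul] using
      hf.convexOn.map_sum_le_of_sum_le_one self_mem_Ici hf₀
        (fun j _ => poissonProb_nonneg hs.le j)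
        (sum_le_hasSum _ (fun j _ => poissonProb_nonneg hs.le j) (hasSum_poissonProb s))
        (fun j _ => poissonProb_nonneg hl (n - j))
  have hlt : f (poissonProb l' 0) < g 0 := by
    simpa only [g, hl', poissonProb_add, zero_add, Finset.range_one, sum_singleton,
      Nat.sub_zero, smul_eq_mul] using
      hf.map_smul_lt self_mem_Ici hf₀ (poissonProb_nonneg hl 0)
        (by simp [poissonProb_zero, (exp_pos _).ne'])
        (poissonProb_pos hs 0) (by simpa [poissonProb_zero] using hs)
  exact htsum_g ▸ Summable.tsum_lt_tsum hle hlt hsum' hg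

theorem tsum_poissonProb_rpow_strictMonoOn_of_lt_one {α : ℝ} (hα₀ : 0 < α) (hα₁ : α < 1) :
    StrictMonoOn (fun l => ∑' k, poissonProb l k ^ α) (Ioi 0) := by
  intro l hl l' hl' hll'
  have h := tsum_comp_poissonProb_lt_of_lt (strictConcaveOn_rpow hα₀ hα₁).neg
    (by simp [zero_rpow hα₀.ne']) (le_of_lt hl) hll'
    (by simpa using (summable_poissonProb_rpow hl hα₀).norm)
    (summable_poissonProb_rpow hl' hα₀).neg
  simpa only [Pi.neg_apply, tsum_neg, neg_lt_neg_iff] using h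

theorem tsum_poissonProb_rpow_strictAntiOn_of_one_lt {α : ℝ} (hα : 1 < α) :
    StrictAntiOn (fun l => ∑' k, poissonProb l k ^ α) (Ioi 0) := fun l hl l' hl' hll' =>
  tsum_comp_poissonProb_lt_of_lt (strictConvexOn_rpow hα)
    (by simp [zero_rpow (by positivity : α ≠ 0)]) (le_of_lt hl) hll'
    (summable_poissonProb_rpow hl (by linarith)).norm
    (summable_poissonProb_rpow hl' (by linarith))

/-- The Rényi entropy of the Poisson distribution with intensity `λ`,
`H_R^α(λ) = (1/(1-α)) · log (∑_{k=0}^∞ (λ^k e^{-λ}/k!)^α)`, is strictly increasing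
in the intensity on `(0, ∞)`, for every fixed `α > 0`, `α ≠ 1`. -/
theorem renyi_entropy_poisson_strictMonoOn (α : ℝ) (hα : 0 < α) (hα1 : α ≠ 1) :
    StrictMonoOn (fun l : ℝ =>
      (1 / (1 - α)) *
        Real.log (∑' k : ℕ, (l ^ k * Real.exp (-l) / (Nat.factorial k : ℝ)) ^ α))
      (Set.Ioi (0 : ℝ)) := by
  intro l hl l' hl' hll'
  rcases hα1.lt_or_gt with hlt | hgt
  · exact mul_lt_mul_of_pos_left
      (log_lt_log (tsum_poissonProb_rpow_pos hl hα)
        (tsum_poissonProb_rpow_strictMonoOn_of_lt_one hα hlt hl hl' hll'))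
      (one_div_pos.2 (sub_pos.2 hlt))
  · exact mul_lt_mul_of_neg_left
      (log_lt_log (tsum_poissonProb_rpow_pos hl' hα)
        (tsum_poissonProb_rpow_strictAntiOn_of_one_lt hgt hl hl' hll'))
      (one_div_neg.2 (sub_neg.2 hgt))
end

section
/- The Shannon entropy of the Poisson distribution, H_S(λ) = -∑_{k=0}^∞ (λ^k e^{-λ}/k!) · log(λ^k e^{-λ}/k!), is a strictly increasing function of λ on (0, +∞). -/
/-!
Since `log p_k(λ) = k log λ - λ - log k!`, the entropy equals
`λ - λ log λ + e^{-λ} ∑ log(k!) λ^k / k!`. The derivative of an exponential generating function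
is the exponential generating function of the shifted sequence, and `log (k+1)! - log k! = log (k+1)`,
so `H_S'(λ) = E[log (N+1)] - log λ` for `N ~ Poisson(λ)`. From `log x ≥ 1 - 1/x` at
`x = (k+1)/λ` and `E[λ/(N+1)] = 1 - e^{-λ}` we get `H_S'(λ) ≥ e^{-λ} > 0`.
-/

open Real
open scoped Nat

noncomputable def egf (a : ℕ → ℝ) (x : ℝ) : ℝ :=
  ∑' k, a k * x ^ k / k !

lemma natCast_succ_mul_div_factorial_succ (k : ℕ) (y : ℝ) :
    ((k + 1 : ℕ) : ℝ) * y / (k + 1)! = y / k ! := by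
  rw [Nat.factorial_succ, Nat.cast_mul]
  field_simp

section Reindex

variable {f : ℕ → ℝ}

lemma summable_natCast_mul_div_factorial (hf : Summable fun k => f (k + 1) / k !) :
    Summable fun k : ℕ => k * f k / k ! := by
  rw [← summable_nat_add_iff 1]
  simpa only [natCast_succ_mul_div_factorial_succ] using hf

lemma tsum_natCast_mul_div_factorial (hf : Summable fun k => f (k + 1) / k !) :
    ∑' k : ℕ, k * f k / k ! = ∑' k, f (k + 1) / k ! := by
  rw [(summable_natCast_mul_div_factorial hf).tsum_eq_zero_add]
  simp only [natCast_succ_mul_div_factorial_succ, CharP.cast_eq_zero, zero_mul, zero_div,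
    zero_add]

end Reindex

lemma tsum_pow_div_factorial (x : ℝ) : ∑' k, x ^ k / k ! = exp x := by
  rw [Real.exp_eq_exp_ℝ, NormedSpace.exp_eq_tsum_div]

lemma summable_pow_succ_div_factorial (x : ℝ) : Summable fun k => x ^ (k + 1) / k ! := by
  simpa only [pow_succ', mul_div_assoc] using (Real.summable_pow_div_factorial x).mul_left x

lemma summable_natCast_mul_pow_div_factorial (x : ℝ) :
    Summable fun k : ℕ => k * x ^ k / k ! :=
  summable_natCast_mul_div_factorial (f := (x ^ ·)) (summable_pow_succ_div_factorial x)

lemma tsum_natCast_mul_pow_div_factorial (x : ℝ) : ∑' k : ℕ, k * x ^ k / k ! = x * exp x := by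
  rw [tsum_natCast_mul_div_factorial (f := (x ^ ·)) (summable_pow_succ_div_factorial x),
    ← tsum_pow_div_factorial, ← tsum_mul_left]
  simp only [pow_succ', mul_div_assoc]

lemma tsum_pow_succ_div_factorial_succ (x : ℝ) :
    ∑' k, x ^ (k + 1) / (k + 1)! = exp x - 1 := by
  rw [← tsum_pow_div_factorial, (Real.summable_pow_div_factorial x).tsum_eq_zero_add]
  simp

namespace egf

variable {a b : ℕ → ℝ} {C r : ℝ}

lemma summable (ha : ∀ k, |a k| ≤ C * r ^ k) (x : ℝ) :
    Summable fun k => a k * x ^ k / k ! := by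
  refine .of_norm_bounded ((Real.summable_pow_div_factorial (r * |x|)).mul_left C) fun k => ?_
  rw [norm_div, norm_mul, norm_pow, Real.norm_natCast, Real.norm_eq_abs, Real.norm_eq_abs,
    mul_pow, ← mul_div_assoc, ← mul_assoc]
  gcongr
  exact ha k

lemma summable_succ (ha : ∀ k, |a k| ≤ C * r ^ k) (x : ℝ) :
    Summable fun k => a (k + 1) * x ^ k / k ! :=
  summable (C := C * r) (fun k => by rw [mul_assoc, ← pow_succ']; exact ha (k + 1)) x

lemma add {x : ℝ} (ha : Summable fun k => a k * x ^ k / k !) (hb : Summable fun k => b k * x ^ k / k !) :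
    egf (fun k => a k + b k) x = egf a x + egf b x := by
  rw [egf, egf, egf, ← ha.tsum_add hb]
  congr 1 with k
  ring

lemma mono {x : ℝ} (ha : Summable fun k => a k * x ^ k / k !) (hb : Summable fun k => b k * x ^ k / k !)
    (hab : ∀ k, a k ≤ b k) (hx : 0 ≤ x) : egf a x ≤ egf b x :=
  ha.tsum_le_tsum (fun k => by gcongr; exact hab k) hb

lemma hasDerivAt (ha : ∀ k, |a k| ≤ C * r ^ k) (x : ℝ) :
    HasDerivAt (egf a) (egf (fun k => a (k + 1)) x) x := by
  set R := |x| + 1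
  have hx : x ∈ Set.Ioo (-R) R := ⟨by linarith [neg_abs_le x], by linarith [le_abs_self x]⟩
  have hu : Summable fun k : ℕ => k * (|a k| * R ^ (k - 1)) / k ! :=
    summable_natCast_mul_div_factorial <| by
      simpa only [Nat.add_sub_cancel, abs_abs] using summable_succ (a := fun k => |a k|)
        (fun k => (abs_abs (a k)).le.trans (ha k)) R
  have hderiv := hasDerivAt_tsum_of_isPreconnected hu isOpen_Ioo (convex_Ioo (-R) R).isPreconnected
    (g := fun k y => a k * y ^ k / k !) (g' := fun k y => a k * (k * y ^ (k - 1)) / k !)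
    (fun k y _ => ((hasDerivAt_pow k y).const_mul (a k)).div_const (k ! : ℝ))
    (fun k y hy => by
      rw [norm_div, norm_mul, norm_mul, norm_pow, Real.norm_natCast, Real.norm_natCast,
        Real.norm_eq_abs, Real.norm_eq_abs, mul_left_comm]
      gcongr
      exact abs_le.2 ⟨hy.1.le, hy.2.le⟩)
    hx (summable ha x) hx
  simp only [mul_left_comm (a _)] at hderiv
  rw [tsum_natCast_mul_div_factorial (by simpa only [Nat.add_sub_cancel] using summable_succ ha x)]
    at hderiv
  simp only [Nat.add_sub_cancel] at hderiv
  exact hderiv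

end egf

lemma abs_log_factorial_le_four_pow (k : ℕ) : |log (k ! : ℝ)| ≤ 4 ^ k := by
  have hk : (k : ℝ) ≤ 2 ^ k := by exact_mod_cast Nat.lt_two_pow_self.le
  rw [abs_of_nonneg (log_natCast_nonneg _)]
  calc log k ! ≤ log ((k : ℝ) ^ k) :=
        log_le_log (by positivity) (by exact_mod_cast Nat.factorial_le_pow k)
    _ = k * log k := log_pow k k
    _ ≤ k * k := by gcongr; exact log_le_self k.cast_nonneg
    _ ≤ 2 ^ k * 2 ^ k := by gcongr
    _ = 4 ^ k := by rw [← mul_pow]; norm_num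

lemma abs_log_natCast_succ_le_two_pow (k : ℕ) : |log ((k : ℝ) + 1)| ≤ 2 ^ k := by
  have hk : (k : ℝ) ≤ 2 ^ k := by exact_mod_cast Nat.lt_two_pow_self.le
  rw [abs_of_nonneg (log_nonneg (by simp))]
  linarith [log_le_sub_one_of_pos (by positivity : (0 : ℝ) < k + 1)]

lemma summable_log_factorial_mul_pow_div_factorial (x : ℝ) :
    Summable fun k => log (k ! : ℝ) * x ^ k / k ! :=
  egf.summable (C := 1) (by simpa using abs_log_factorial_le_four_pow) x

lemma summable_log_natCast_succ_mul_pow_div_factorial (x : ℝ) :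
    Summable fun k : ℕ => log ((k : ℝ) + 1) * x ^ k / k ! :=
  egf.summable (C := 1) (by simpa using abs_log_natCast_succ_le_two_pow) x

noncomputable def poissonEntropy (l : ℝ) : ℝ :=
  l - l * log l + exp (-l) * egf (fun k => log k !) l

lemma neg_tsum_poisson_mul_log {l : ℝ} (hl : l ≠ 0) :
    -∑' k : ℕ, (l ^ k * exp (-l) / k !) * log (l ^ k * exp (-l) / k !) = poissonEntropy l := by
  have hterm (k : ℕ) : (l ^ k * exp (-l) / k !) * log (l ^ k * exp (-l) / k !) =
      exp (-l) * (log l * (k * l ^ k / k !) - l * (l ^ k / k !) - log k ! * l ^ k / k !) := by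
    rw [log_div (by positivity) (by positivity), log_mul (pow_ne_zero k hl) (exp_pos _).ne',
      log_pow, log_exp]
    ring
  have hk := summable_natCast_mul_pow_div_factorial l
  have h1 := Real.summable_pow_div_factorial l
  rw [tsum_congr hterm, tsum_mul_left,
    ((hk.mul_left _).sub (h1.mul_left _)).tsum_sub (summable_log_factorial_mul_pow_div_factorial l),
    (hk.mul_left _).tsum_sub (h1.mul_left _), tsum_mul_left, tsum_mul_left,
    tsum_natCast_mul_pow_div_factorial, tsum_pow_div_factorial, poissonEntropy, egf, exp_neg]
  field_simp
  ring

lemma hasDerivAt_poissonEntropy {l : ℝ} (hl : l ≠ 0) :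
    HasDerivAt poissonEntropy (exp (-l) * egf (fun k => log ((k : ℝ) + 1)) l - log l) l := by
  have hG := egf.hasDerivAt (a := fun k => log (k ! : ℝ)) (C := 1)
    (by simpa using abs_log_factorial_le_four_pow) l
  have hG' : egf (fun k => log ((k + 1)! : ℝ)) l =
      egf (fun k => log ((k : ℝ) + 1)) l + egf (fun k => log k !) l := by
    rw [← egf.add (summable_log_natCast_succ_mul_pow_div_factorial l) (summable_log_factorial_mul_pow_div_factorial l)]
    congr 1 with k
    rw [Nat.factorial_succ, Nat.cast_mul, log_mul (by positivity) (by positivity)]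
    push_cast
    ring
  rw [hG'] at hG
  refine (((hasDerivAt_id l).sub (hasDerivAt_mul_log hl)).add
    ((hasDerivAt_neg l).exp.mul hG)).congr_deriv ?_
  ring

lemma exp_mul_log_add_one_le_egf_log_succ {l : ℝ} (hl : 0 < l) :
    exp l * log l + 1 ≤ egf (fun k => log ((k : ℝ) + 1)) l := by
  have hlow (k : ℕ) : log l + 1 - l / (k + 1) ≤ log ((k : ℝ) + 1) := by
    have := one_sub_inv_le_log_of_pos (x := (k + 1) / l) (by positivity)
    rw [inv_div, log_div (by positivity) hl.ne'] at this
    linarith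
  have hsplit (k : ℕ) : (log l + 1 - l / (k + 1)) * l ^ k / k ! =
      (log l + 1) * (l ^ k / k !) - l ^ (k + 1) / (k + 1)! := by
    rw [Nat.factorial_succ, Nat.cast_mul]
    push_cast
    field_simp
    ring
  have h1 := Real.summable_pow_div_factorial l
  have h2 := (summable_nat_add_iff 1).2 h1
  calc exp l * log l + 1 = ∑' k : ℕ, (log l + 1 - l / (k + 1)) * l ^ k / k ! := by
        rw [tsum_congr hsplit, (h1.mul_left _).tsum_sub h2, tsum_mul_left,
          tsum_pow_div_factorial, tsum_pow_succ_div_factorial_succ]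
        ring
    _ ≤ egf (fun k => log ((k : ℝ) + 1)) l :=
        egf.mono (((h1.mul_left _).sub h2).congr fun k => (hsplit k).symm)
          (summable_log_natCast_succ_mul_pow_div_factorial l) hlow hl.le

lemma exp_neg_le_deriv_poissonEntropy {l : ℝ} (hl : 0 < l) :
    exp (-l) ≤ deriv poissonEntropy l := by
  rw [(hasDerivAt_poissonEntropy hl.ne').deriv]
  calc exp (-l) = exp (-l) * (exp l * log l + 1) - log l := by
        rw [mul_add, ← mul_assoc, ← exp_add]
        simp
    _ ≤ _ := by gcongr; exact exp_mul_log_add_one_le_egf_log_succ hl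

/-- The Shannon entropy of the Poisson distribution,
`H_S(λ) = -∑_{k=0}^∞ (λ^k e^{-λ}/k!) · log(λ^k e^{-λ}/k!)`,
is strictly increasing in the intensity `λ` on `(0, ∞)`. -/
theorem shannon_entropy_poisson_strictMonoOn :
    StrictMonoOn (fun l : ℝ =>
      -∑' k : ℕ, (l ^ k * Real.exp (-l) / (Nat.factorial k : ℝ)) *
        Real.log (l ^ k * Real.exp (-l) / (Nat.factorial k : ℝ)))
      (Set.Ioi (0 : ℝ)) := by
  refine StrictMonoOn.congr ?_ fun l hl => (neg_tsum_poisson_mul_log (ne_of_gt hl)).symm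
  refine strictMonoOn_of_deriv_pos (convex_Ioi 0)
    (fun l hl => (hasDerivAt_poissonEntropy (ne_of_gt hl)).continuousAt.continuousWithinAt)
    fun l hl => ?_
  rw [interior_Ioi] at hl
  exact (exp_pos _).trans_le (exp_neg_le_deriv_poissonEntropy hl)
end

section
/- For every λ > 0, the inequality e^{-λ} · ∑_{k=0}^∞ (λ^k/k!) · log(1 + 1/(k+1)) < 1/λ holds, where log denotes the natural logarithm. -/
lemma poisson_aux_log_le (l : ℝ) (hl : 0 < l) (k : ℕ) :
    l ^ k / (Nat.factorial k : ℝ) * Real.log (1 + 1 / ((k : ℝ) + 1))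
      ≤ l ^ k / (Nat.factorial (k + 1) : ℝ) := by
  have hk1 : (0:ℝ) < (k:ℝ) + 1 := by positivity
  have hlog : Real.log (1 + 1 / ((k : ℝ) + 1)) ≤ 1 / ((k : ℝ) + 1) := by
    have := Real.log_le_sub_one_of_pos (x := 1 + 1 / ((k : ℝ) + 1)) (by positivity)
    linarith
  have hpos : (0:ℝ) ≤ l ^ k / (Nat.factorial k : ℝ) := by positivity
  calc l ^ k / (Nat.factorial k : ℝ) * Real.log (1 + 1 / ((k : ℝ) + 1))
      ≤ l ^ k / (Nat.factorial k : ℝ) * (1 / ((k : ℝ) + 1)) :=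
        mul_le_mul_of_nonneg_left hlog hpos
    _ = l ^ k / (Nat.factorial (k + 1) : ℝ) := by
        rw [Nat.factorial_succ]
        push_cast
        field_simp

/-- For every `λ > 0`, `e^{-λ} · ∑_{k=0}^∞ (λ^k/k!) · log(1 + 1/(k+1)) < 1/λ`. -/
theorem poisson_second_derivative_key_inequality (l : ℝ) (hl : 0 < l) :
    Real.exp (-l) *
      (∑' k : ℕ, l ^ k / (Nat.factorial k : ℝ) * Real.log (1 + 1 / ((k : ℝ) + 1)))
      < 1 / l := by
  have hsum2 : Summable (fun k : ℕ => l ^ k / (Nat.factorial (k + 1) : ℝ)) := by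
    have h := (Real.summable_pow_div_factorial l).comp_injective
      (Nat.succ_injective)
    have : (fun k : ℕ => l ^ (k + 1) / (Nat.factorial (k + 1) : ℝ)) =
        (fun n : ℕ => l ^ n / (Nat.factorial n : ℝ)) ∘ Nat.succ := rfl
    have h' : Summable (fun k : ℕ => l ^ (k + 1) / (Nat.factorial (k + 1) : ℝ)) := by
      rw [this]; exact h
    have := h'.mul_left (1 / l)
    refine this.congr fun k => ?_
    field_simp
    ring
  have hnonneg : ∀ k : ℕ,
      0 ≤ l ^ k / (Nat.factorial k : ℝ) * Real.log (1 + 1 / ((k : ℝ) + 1)) := by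
    intro k
    have : (0:ℝ) ≤ Real.log (1 + 1 / ((k : ℝ) + 1)) := by
      apply Real.log_nonneg
      have : (0:ℝ) ≤ 1 / ((k : ℝ) + 1) := by positivity
      linarith
    positivity
  have hsum1 : Summable (fun k : ℕ =>
      l ^ k / (Nat.factorial k : ℝ) * Real.log (1 + 1 / ((k : ℝ) + 1))) :=
    Summable.of_nonneg_of_le hnonneg (fun k => poisson_aux_log_le l hl k) hsum2
  have hle : (∑' k : ℕ, l ^ k / (Nat.factorial k : ℝ) * Real.log (1 + 1 / ((k : ℝ) + 1)))
      ≤ ∑' k : ℕ, l ^ k / (Nat.factorial (k + 1) : ℝ) :=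
    Summable.tsum_le_tsum (fun k => poisson_aux_log_le l hl k) hsum1 hsum2
  -- compute the bounding sum
  have hexp : (∑' k : ℕ, l ^ k / (Nat.factorial k : ℝ)) = Real.exp l := by
    rw [Real.exp_eq_exp_ℝ, NormedSpace.exp_eq_tsum_div]
  have hshift : (∑' k : ℕ, l ^ (k + 1) / (Nat.factorial (k + 1) : ℝ)) = Real.exp l - 1 := by
    have h0 := Summable.tsum_eq_zero_add (Real.summable_pow_div_factorial l)
    rw [hexp] at h0
    simp only [pow_zero, Nat.factorial_zero, Nat.cast_one] at h0
    linarith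
  have hT : (∑' k : ℕ, l ^ k / (Nat.factorial (k + 1) : ℝ)) = (Real.exp l - 1) / l := by
    have : (∑' k : ℕ, l ^ k / (Nat.factorial (k + 1) : ℝ))
        = ∑' k : ℕ, (1 / l) * (l ^ (k + 1) / (Nat.factorial (k + 1) : ℝ)) := by
      congr 1; funext k; field_simp; ring
    rw [this, tsum_mul_left, hshift]
    field_simp
  have hexppos : (0:ℝ) < Real.exp (-l) := Real.exp_pos _
  have key : Real.exp (-l) *
      (∑' k : ℕ, l ^ k / (Nat.factorial k : ℝ) * Real.log (1 + 1 / ((k : ℝ) + 1)))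
      ≤ Real.exp (-l) * ((Real.exp l - 1) / l) := by
    apply mul_le_mul_of_nonneg_left _ hexppos.le
    rw [← hT]; exact hle
  have hfinal : Real.exp (-l) * ((Real.exp l - 1) / l) < 1 / l := by
    have h1 : Real.exp (-l) * (Real.exp l - 1) = 1 - Real.exp (-l) := by
      rw [mul_sub, ← Real.exp_add]
      simp
    rw [← mul_div_assoc, h1, div_lt_div_iff₀ hl hl]
    nlinarith [Real.exp_pos (-l)]
  linarith
end

section
/- For every λ > 0, every n ≥ 0 and every m ≥ 0, the consecutive-block sums s_n(m, λ) = ∑_{k=m}^{m+n} λ^k e^{-λ}/k! satisfy: s_n(m+1, λ) < s_n(m, λ) if and only if λ^{n+1} < (m+1)(m+2)⋯(m+n+1). -/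
/-!
Shifting the window `[m, m + n]` one step to the right trades the term `p_m` for `p_{m+n+1}`,
so the block sum decreases exactly when `p_{m+n+1} < p_m`. The ratio `p_{m+n+1} / p_m` is
`λ^{n+1} / ((m+1)(m+2)⋯(m+n+1))`.
-/

open Finset
open scoped Nat

theorem Finset.sum_Icc_succ_lt_sum_Icc_iff {M : Type*} [AddCommMonoid M] [PartialOrder M]
    [IsOrderedCancelAddMonoid M] (f : ℕ → M) (m n : ℕ) :
    ∑ k ∈ Icc (m + 1) (m + 1 + n), f k < ∑ k ∈ Icc m (m + n), f k ↔ f (m + n + 1) < f m := by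
  have shift : ∑ k ∈ Icc (m + 1) (m + 1 + n), f k + f m
      = ∑ k ∈ Icc m (m + n), f k + f (m + n + 1) := by
    rw [Icc_add_one_left_eq_Ioc, add_right_comm, sum_Ioc_add_eq_sum_Icc (by omega),
      sum_Icc_succ_top (by omega)]
  rw [← add_lt_add_iff_right (f m), shift, add_lt_add_iff_left]

theorem Nat.factorial_mul_prod_Ioc {a b : ℕ} (hab : a ≤ b) : a ! * ∏ j ∈ Ioc a b, j = b ! := by
  induction b, hab using Nat.le_induction with
  | base => simp
  | succ b hab ih => rw [prod_Ioc_succ_top hab, ← mul_assoc, ih, Nat.factorial_succ, mul_comm]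

theorem pow_mul_exp_neg_div_factorial_lt_iff {l : ℝ} (hl : 0 < l) (a d : ℕ) :
    l ^ (a + d) * Real.exp (-l) / (a + d)! < l ^ a * Real.exp (-l) / a ! ↔
      l ^ d < ∏ j ∈ Ioc a (a + d), (j : ℝ) := by
  have hprod : (0 : ℝ) < ∏ j ∈ Ioc a (a + d), (j : ℝ) :=
    prod_pos fun j hj => Nat.cast_pos.mpr (Nat.zero_lt_of_lt (mem_Ioc.mp hj).1)
  have ratio : l ^ (a + d) * Real.exp (-l) / (a + d)!
      = l ^ a * Real.exp (-l) / a ! * (l ^ d / ∏ j ∈ Ioc a (a + d), (j : ℝ)) := by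
    rw [← Nat.factorial_mul_prod_Ioc (Nat.le_add_right a d), Nat.cast_mul, Nat.cast_prod, pow_add]
    field_simp
  rw [ratio, mul_lt_iff_lt_one_right (by positivity), div_lt_one hprod]

/-- For every `λ > 0`, `n ≥ 0` and `m ≥ 0`, with `s_n(m,λ) = ∑_{k=m}^{m+n} λ^k e^{-λ}/k!`,
one has `s_n(m+1,λ) < s_n(m,λ)` iff `λ^{n+1} < (m+1)(m+2)⋯(m+n+1)`. -/
theorem poisson_block_sum_decrease_iff (l : ℝ) (hl : 0 < l) (n m : ℕ) :
    (∑ k ∈ Finset.Icc (m + 1) (m + 1 + n), l ^ k * Real.exp (-l) / (Nat.factorial k : ℝ))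
        < ∑ k ∈ Finset.Icc m (m + n), l ^ k * Real.exp (-l) / (Nat.factorial k : ℝ)
      ↔ l ^ (n + 1) < ∏ j ∈ Finset.Icc (m + 1) (m + n + 1), (j : ℝ) := by
  rw [sum_Icc_succ_lt_sum_Icc_iff, add_assoc, pow_mul_exp_neg_div_factorial_lt_iff hl,
    Icc_add_one_left_eq_Ioc]
end

section
/- For every fixed α with 0 < α < 1, the function ψ(α, λ) = e^{-αλ} · ∑_{k=0}^∞ (λ^k/k!)^α is strictly increasing as a function of λ on (0, +∞). -/
/-!
Write `Po(l)` for the Poisson distribution, so that `ψ(α, l) = ∑ₖ Po(l)(k) ^ α`. For `y = x + z`,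
`Po(y)` is the convolution of `Po(x)` and `Po(z)`, and concavity of `t ↦ t ^ α` (Jensen with the
sub-probability weights `Po(z)(n - k)`, `k ≤ n`) gives `Po(y)(n) ^ α ≥ ∑ₖ Po(x)(k) ^ α Po(z)(n - k)`.
Summing over `n` yields `ψ(α, y) ≥ ψ(α, x) · ∑ⱼ Po(z)(j) = ψ(α, x)`, with strict inequality already
at `n = 0` since `Po(z)(0) = e⁻ᶻ < 1`.
-/

open Real Finset
open scoped Nat

theorem Real.sum_mul_rpow_le_rpow_sum_mul {ι : Type*} (s : Finset ι) {α : ℝ} (hα : 0 < α)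
    (hα1 : α ≤ 1) {w f : ι → ℝ} (hw : ∀ i, 0 ≤ w i) (hf : ∀ i, 0 ≤ f i)
    (hw1 : ∑ i ∈ s, w i ≤ 1) :
    ∑ i ∈ s, w i * f i ^ α ≤ (∑ i ∈ s, w i * f i) ^ α := by
  have holder := inner_le_weight_mul_Lp_of_nonneg s (one_le_inv_iff₀.2 ⟨hα, hα1⟩) w
    (fun i ↦ f i ^ α) hw fun i ↦ rpow_nonneg (hf i) α
  simp only [← rpow_mul (hf _), mul_inv_cancel₀ hα.ne', rpow_one, inv_inv] at holder
  calc ∑ i ∈ s, w i * f i ^ α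
      ≤ (∑ i ∈ s, w i) ^ (1 - α) * (∑ i ∈ s, w i * f i) ^ α := holder
    _ ≤ 1 * (∑ i ∈ s, w i * f i) ^ α := by
      gcongr
      · exact rpow_nonneg (sum_nonneg fun i _ ↦ mul_nonneg (hw i) (hf i)) α
      · exact rpow_le_one (sum_nonneg fun i _ ↦ hw i) hw1 (by linarith)
    _ = (∑ i ∈ s, w i * f i) ^ α := one_mul _

/-- `ProbabilityTheory.poissonPMFReal` with a real rather than an `ℝ≥0` intensity. -/
noncomputable def poissonMass (l : ℝ) (k : ℕ) : ℝ := exp (-l) * (l ^ k / k !)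

lemma poissonMass_nonneg {l : ℝ} (hl : 0 ≤ l) (k : ℕ) : 0 ≤ poissonMass l k := by
  unfold poissonMass; positivity

lemma poissonMass_zero (l : ℝ) : poissonMass l 0 = exp (-l) := by
  simp [poissonMass]

lemma hasSum_poissonMass (l : ℝ) : HasSum (poissonMass l) 1 := by
  have h := (NormedSpace.expSeries_div_hasSum_exp l).mul_left (exp (-l))
  rwa [← exp_eq_exp_ℝ, ← exp_add, neg_add_cancel, exp_zero] at h

lemma sum_antidiagonal_poissonMass_mul (x z : ℝ) (n : ℕ) :
    ∑ kl ∈ antidiagonal n, poissonMass x kl.1 * poissonMass z kl.2 = poissonMass (x + z) n := by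
  rw [poissonMass, (Commute.all x z).add_pow', sum_div, mul_sum]
  refine sum_congr rfl fun kl hkl ↦ ?_
  obtain rfl := Finset.HasAntidiagonal.mem_antidiagonal.1 hkl
  rw [nsmul_eq_mul, Nat.cast_add_choose, poissonMass, poissonMass, neg_add, exp_add]
  field_simp

lemma sum_antidiagonal_poissonMass_snd_le_one {l : ℝ} (hl : 0 ≤ l) (n : ℕ) :
    ∑ kl ∈ antidiagonal n, poissonMass l kl.2 ≤ 1 := by
  rw [Nat.antidiagonal_eq_map', sum_map]
  exact (hasSum_poissonMass l).summable.sum_le_tsum _ (fun k _ ↦ poissonMass_nonneg hl k)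
    |>.trans_eq (hasSum_poissonMass l).tsum_eq

lemma summable_poissonMass_rpow {α l : ℝ} (hα : 0 < α) (hl : 0 ≤ l) :
    Summable fun k ↦ poissonMass l k ^ α := by
  have hgeom : (2 : ℝ)⁻¹ ^ α < 1 := rpow_lt_one (by norm_num) (by norm_num) hα
  refine .of_nonneg_of_le (fun k ↦ rpow_nonneg (poissonMass_nonneg hl k) α) (fun k ↦ ?_)
    ((summable_geometric_of_lt_one (by positivity) hgeom).mul_left (exp l ^ α))
  -- `l ^ k / k! = 2⁻ᵏ (2l) ^ k / k!` and the last factor is at most `exp (2l)`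
  have hbound : poissonMass l k ≤ exp l * 2⁻¹ ^ k := by
    have h := pow_div_factorial_le_exp (2 * l) (by positivity) k
    calc poissonMass l k = exp (-l) * ((2 * l) ^ k / k !) * 2⁻¹ ^ k := by
          rw [poissonMass, mul_pow]
          field_simp
          rw [mul_assoc, ← mul_pow]
          norm_num
      _ ≤ exp (-l) * exp (2 * l) * 2⁻¹ ^ k := by gcongr
      _ = exp l * 2⁻¹ ^ k := by rw [← exp_add]; ring_nf
  calc poissonMass l k ^ α ≤ (exp l * 2⁻¹ ^ k) ^ α :=
        rpow_le_rpow (poissonMass_nonneg hl k) hbound hα.le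
    _ = exp l ^ α * (2⁻¹ ^ α) ^ k := by
        rw [mul_rpow (exp_pos l).le (by positivity), ← rpow_natCast, ← rpow_natCast,
          ← rpow_mul (by norm_num), ← rpow_mul (by norm_num), mul_comm (k : ℝ) α]

lemma sum_antidiagonal_poissonMass_rpow_mul_le {α x z : ℝ} (hα : 0 < α) (hα1 : α ≤ 1)
    (hx : 0 ≤ x) (hz : 0 ≤ z) (n : ℕ) :
    ∑ kl ∈ antidiagonal n, poissonMass x kl.1 ^ α * poissonMass z kl.2 ≤
      poissonMass (x + z) n ^ α := by
  calc ∑ kl ∈ antidiagonal n, poissonMass x kl.1 ^ α * poissonMass z kl.2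
      = ∑ kl ∈ antidiagonal n, poissonMass z kl.2 * poissonMass x kl.1 ^ α :=
        sum_congr rfl fun _ _ ↦ mul_comm _ _
    _ ≤ (∑ kl ∈ antidiagonal n, poissonMass z kl.2 * poissonMass x kl.1) ^ α :=
        sum_mul_rpow_le_rpow_sum_mul _ hα hα1 (fun kl : ℕ × ℕ ↦ poissonMass_nonneg hz kl.2)
          (fun kl : ℕ × ℕ ↦ poissonMass_nonneg hx kl.1)
          (sum_antidiagonal_poissonMass_snd_le_one hz n)
    _ = poissonMass (x + z) n ^ α := by
        rw [← sum_antidiagonal_poissonMass_mul]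
        simp only [mul_comm]

lemma tsum_poissonMass_rpow_lt {α x y : ℝ} (hα : 0 < α) (hα1 : α < 1) (hx : 0 ≤ x)
    (hxy : x < y) : ∑' k, poissonMass x k ^ α < ∑' k, poissonMass y k ^ α := by
  obtain ⟨z, hz, rfl⟩ : ∃ z, 0 < z ∧ x + z = y := ⟨y - x, by linarith, by ring⟩
  have hp := summable_poissonMass_rpow hα hx
  have hr := hasSum_poissonMass z
  have hstrict : ∑ kl ∈ antidiagonal 0, poissonMass x kl.1 ^ α * poissonMass z kl.2 <
      poissonMass (x + z) 0 ^ α := by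
    have hr0 : poissonMass z 0 < poissonMass z 0 ^ α := by
      rw [poissonMass_zero]
      exact self_lt_rpow_of_lt_one (exp_pos _) (exp_lt_one_iff.2 (neg_lt_zero.2 hz)) hα1
    rw [Nat.antidiagonal_zero, sum_singleton, ← sum_antidiagonal_poissonMass_mul,
      Nat.antidiagonal_zero, sum_singleton, mul_rpow (poissonMass_nonneg hx 0)
        (poissonMass_nonneg hz.le 0), poissonMass_zero x]
    exact mul_lt_mul_of_pos_left hr0 (rpow_pos_of_pos (exp_pos _) α)
  calc ∑' k, poissonMass x k ^ α = (∑' k, poissonMass x k ^ α) * ∑' k, poissonMass z k := by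
        rw [hr.tsum_eq, mul_one]
    _ = ∑' n, ∑ kl ∈ antidiagonal n, poissonMass x kl.1 ^ α * poissonMass z kl.2 :=
        tsum_mul_tsum_eq_tsum_sum_antidiagonal_of_summable_norm hp.norm hr.summable.norm
    _ < ∑' k, poissonMass (x + z) k ^ α :=
        Summable.tsum_lt_tsum_of_nonneg
          (fun n ↦ sum_nonneg fun kl _ ↦ mul_nonneg (rpow_nonneg (poissonMass_nonneg hx _) α)
            (poissonMass_nonneg hz.le _))
          (sum_antidiagonal_poissonMass_rpow_mul_le hα hα1.le hx hz.le) hstrict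
          (summable_poissonMass_rpow hα (by linarith))

lemma exp_mul_tsum_rpow_pow_div_factorial {α l : ℝ} (hl : 0 ≤ l) :
    exp (-α * l) * ∑' k : ℕ, (l ^ k / k !) ^ α = ∑' k, poissonMass l k ^ α := by
  rw [show -α * l = -l * α by ring, exp_mul, ← tsum_mul_left]
  refine tsum_congr fun k ↦ ?_
  rw [poissonMass, mul_rpow (exp_pos _).le (by positivity)]

/-- For every fixed `0 < α < 1`, the function `ψ(α,λ) = e^{-αλ} ∑_{k=0}^∞ (λ^k/k!)^α`
is strictly increasing in `λ` on `(0, ∞)`. -/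
theorem psi_strictMonoOn_of_alpha_lt_one (α : ℝ) (hα : 0 < α) (hα1 : α < 1) :
    StrictMonoOn (fun l : ℝ =>
      Real.exp (-α * l) * ∑' k : ℕ, (l ^ k / (Nat.factorial k : ℝ)) ^ α)
      (Set.Ioi (0 : ℝ)) := by
  have hmono : StrictMonoOn (fun l ↦ ∑' k, poissonMass l k ^ α) (Set.Ioi 0) :=
    fun x hx _ _ hxy ↦ tsum_poissonMass_rpow_lt hα hα1 (le_of_lt hx) hxy
  exact hmono.congr fun l hl ↦ (exp_mul_tsum_rpow_pow_div_factorial (le_of_lt hl)).symm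
end

section
/- For every fixed α > 1, the function ψ(α, λ) = e^{-αλ} · ∑_{k=0}^∞ (λ^k/k!)^α is strictly decreasing as a function of λ on (0, +∞). -/
/-!
Write `F(x) = ∑ₖ qₖ(x)^α` with `qₖ(x) = xᵏ/k!`, so that `ψ(α, x) = e^{-αx} F(x)` and
`qₖ₊₁' = qₖ`. Termwise differentiation gives `F' = ∑ₖ α qₖ₊₁^{α-1} qₖ`, and Young's inequality
`α a^{α-1} b ≤ (α-1) a^α + b^α` bounds this by `(α-1)(F - q₀^α) + F = αF - (α-1)`.
Hence `ψ' = e^{-αx} (F' - αF) ≤ -(α-1) e^{-αx} < 0`.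
-/

open Nat

namespace Real

theorem mul_rpow_sub_one_mul_le {α a b : ℝ} (hα : 1 < α) (ha : 0 ≤ a) (hb : 0 ≤ b) :
    α * a ^ (α - 1) * b ≤ (α - 1) * a ^ α + b ^ α := by
  have hα₁ : α - 1 ≠ 0 := sub_ne_zero.2 hα.ne'
  have young := young_inequality_of_nonneg (rpow_nonneg ha (α - 1)) hb
    (HolderConjugate.conjExponent hα).symm
  rw [← rpow_mul ha, conjExponent, mul_div_cancel₀ _ hα₁] at young
  calc α * a ^ (α - 1) * b = α * (a ^ (α - 1) * b) := mul_assoc _ _ _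
    _ ≤ α * (a ^ α / (α / (α - 1)) + b ^ α / α) := by gcongr
    _ = (α - 1) * a ^ α + b ^ α := by field_simp

theorem pow_div_factorial_rpow_le_exp {x : ℝ} (hx : 0 ≤ x) {α : ℝ} (hα : 0 ≤ α) (k : ℕ) :
    (x ^ k / k !) ^ α ≤ exp (α * x) := by
  rw [mul_comm, exp_mul]
  exact rpow_le_rpow (by positivity) (pow_div_factorial_le_exp x hx k) hα

theorem rpow_pow_div_factorial_le {x : ℝ} (hx : 0 ≤ x) {α : ℝ} (hα : 1 ≤ α) (k : ℕ) :
    (x ^ k / k !) ^ α ≤ exp ((α - 1) * x) * (x ^ k / k !) := by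
  have hq : 0 ≤ x ^ k / k ! := by positivity
  calc (x ^ k / k !) ^ α = (x ^ k / k !) ^ (α - 1) * (x ^ k / k !) := by
        rw [← rpow_add_one' hq (by linarith), sub_add_cancel]
    _ ≤ exp ((α - 1) * x) * (x ^ k / k !) := by
        gcongr; exact pow_div_factorial_rpow_le_exp hx (by linarith) k

theorem summable_pow_div_factorial_rpow {x : ℝ} (hx : 0 ≤ x) {α : ℝ} (hα : 1 ≤ α) :
    Summable fun k : ℕ => (x ^ k / k !) ^ α :=
  .of_nonneg_of_le (fun k => by positivity) (rpow_pow_div_factorial_le hx hα)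
    ((summable_pow_div_factorial x).mul_left _)

theorem hasDerivAt_pow_succ_div_factorial (k : ℕ) (x : ℝ) :
    HasDerivAt (fun l : ℝ => l ^ (k + 1) / (k + 1) !) (x ^ k / k !) x := by
  refine ((hasDerivAt_pow (k + 1) x).div_const ((k + 1) ! : ℝ)).congr_deriv ?_
  rw [factorial_succ]
  push_cast
  field_simp

theorem hasDerivAt_pow_succ_div_factorial_rpow {α : ℝ} (hα : 1 ≤ α) (k : ℕ) (x : ℝ) :
    HasDerivAt (fun l : ℝ => (l ^ (k + 1) / (k + 1) !) ^ α)
      (α * (x ^ (k + 1) / (k + 1) !) ^ (α - 1) * (x ^ k / k !)) x :=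
  ((hasDerivAt_pow_succ_div_factorial k x).rpow_const (Or.inr hα)).congr_deriv (by ring)

theorem hasDerivAt_tsum_pow_succ_div_factorial_rpow {α x : ℝ} (hα : 1 ≤ α) (hx : 0 < x) :
    HasDerivAt (fun l : ℝ => ∑' k : ℕ, (l ^ (k + 1) / (k + 1) !) ^ α)
      (∑' k : ℕ, α * (x ^ (k + 1) / (k + 1) !) ^ (α - 1) * (x ^ k / k !)) x := by
  have hx' : x ∈ Set.Ioo 0 (x + 1) := ⟨hx, by linarith⟩
  refine hasDerivAt_tsum_of_isPreconnected
    ((summable_pow_div_factorial (x + 1)).mul_left (α * exp ((α - 1) * (x + 1))))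
    isOpen_Ioo isPreconnected_Ioo
    (fun k y _ => hasDerivAt_pow_succ_div_factorial_rpow hα k y) (fun k y hy => ?_) hx'
    ((summable_nat_add_iff 1).2 (summable_pow_div_factorial_rpow hx.le hα)) hx'
  have hy₀ : 0 ≤ y := hy.1.le
  rw [norm_of_nonneg (by positivity)]
  gcongr
  · exact (pow_div_factorial_rpow_le_exp hy₀ (by linarith) _).trans
      (exp_le_exp.2 (mul_le_mul_of_nonneg_left hy.2.le (by linarith)))
  · exact hy.2.le

theorem tsum_pow_div_factorial_rpow_eq {α x : ℝ} (hα : 1 ≤ α) (hx : 0 ≤ x) :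
    ∑' k : ℕ, (x ^ k / k !) ^ α = 1 + ∑' k : ℕ, (x ^ (k + 1) / (k + 1) !) ^ α := by
  rw [(summable_pow_div_factorial_rpow hx hα).tsum_eq_zero_add]
  simp

theorem hasDerivAt_tsum_pow_div_factorial_rpow {α x : ℝ} (hα : 1 ≤ α) (hx : 0 < x) :
    HasDerivAt (fun l : ℝ => ∑' k : ℕ, (l ^ k / k !) ^ α)
      (∑' k : ℕ, α * (x ^ (k + 1) / (k + 1) !) ^ (α - 1) * (x ^ k / k !)) x := by
  refine ((hasDerivAt_tsum_pow_succ_div_factorial_rpow hα hx).const_add 1).congr_of_eventuallyEq ?_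
  filter_upwards [Ioi_mem_nhds hx] with l hl
  exact tsum_pow_div_factorial_rpow_eq hα (le_of_lt hl)

theorem tsum_mul_rpow_pow_succ_div_factorial_le {α x : ℝ} (hα : 1 < α) (hx : 0 ≤ x) :
    ∑' k : ℕ, α * (x ^ (k + 1) / (k + 1) !) ^ (α - 1) * (x ^ k / k !)
      ≤ α * ∑' k : ℕ, (x ^ k / k !) ^ α - (α - 1) := by
  have hF := summable_pow_div_factorial_rpow hx hα.le
  have hG := (summable_nat_add_iff 1).2 hF
  have hyoung (k : ℕ) := mul_rpow_sub_one_mul_le hα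
    (by positivity : 0 ≤ x ^ (k + 1) / (k + 1) !) (by positivity : 0 ≤ x ^ k / k !)
  have hbound := (hG.mul_left (α - 1)).add hF
  calc ∑' k : ℕ, α * (x ^ (k + 1) / (k + 1) !) ^ (α - 1) * (x ^ k / k !)
      ≤ ∑' k : ℕ, ((α - 1) * (x ^ (k + 1) / (k + 1) !) ^ α + (x ^ k / k !) ^ α) :=
        (Summable.of_nonneg_of_le (fun k => by positivity) hyoung hbound).tsum_le_tsum
          hyoung hbound
    _ = (α - 1) * ∑' k : ℕ, (x ^ (k + 1) / (k + 1) !) ^ α + ∑' k : ℕ, (x ^ k / k !) ^ α := by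
        rw [(hG.mul_left _).tsum_add hF, tsum_mul_left]
    _ = α * ∑' k : ℕ, (x ^ k / k !) ^ α - (α - 1) := by
        rw [tsum_pow_div_factorial_rpow_eq hα.le hx]; ring

end Real

open Real

/-- For every fixed `α > 1`, the function `ψ(α,λ) = e^{-αλ} ∑_{k=0}^∞ (λ^k/k!)^α`
is strictly decreasing in `λ` on `(0, ∞)`. -/
theorem psi_strictAntiOn_of_one_lt_alpha (α : ℝ) (hα : 1 < α) :
    StrictAntiOn (fun l : ℝ =>
      Real.exp (-α * l) * ∑' k : ℕ, (l ^ k / (Nat.factorial k : ℝ)) ^ α)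
      (Set.Ioi (0 : ℝ)) := by
  have hderiv (x : ℝ) (hx : 0 < x) := (((hasDerivAt_id' x).const_mul (-α)).exp).mul
    (hasDerivAt_tsum_pow_div_factorial_rpow hα.le hx)
  refine strictAntiOn_of_hasDerivWithinAt_neg (convex_Ioi 0)
    (fun x hx => (hderiv x hx).continuousAt.continuousWithinAt)
    (fun x hx => (hderiv x (by simpa using hx)).hasDerivWithinAt) (fun x hx => ?_)
  rw [interior_Ioi] at hx
  have hD := tsum_mul_rpow_pow_succ_div_factorial_le hα hx.le
  have hexp := exp_pos (-α * x)
  nlinarith [mul_le_mul_of_nonneg_left hD hexp.le, mul_pos hexp (sub_pos.2 hα)]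
end

section
/- For every α > 0 and every λ > 0, the function λ ↦ ψ(α, λ) = e^{-αλ} · ∑_{k=0}^∞ (λ^k/k!)^α is differentiable at λ with derivative ψ'_λ(α, λ) = α e^{-αλ} · ∑_{k=0}^∞ (k − λ) · λ^{αk − 1}/(k!)^α. -/
/-!
Expanding `ψ(α, x) = ∑ₖ e^{-αx} (x^k/k!)^α` and differentiating term by term gives
`α e^{-αx} (k - x) x^{αk-1} / (k!)^α` for the `k`-th term. On `x ∈ (l/2, 2l)` these derivatives are
dominated by a constant times `(k + 2l) ((2l)^α)^k / (k!)^α`, which is summable because `(k!)^α`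
grows faster than any geometric sequence (ratio test), so the series may be differentiated
termwise.
-/

open Real Filter Topology

open scoped Nat

lemma pow_div_factorial_rpow {x : ℝ} (hx : 0 ≤ x) (k : ℕ) (α : ℝ) :
    (x ^ k / (k ! : ℝ)) ^ α = x ^ (α * k) / (k ! : ℝ) ^ α := by
  rw [div_rpow (by positivity) (by positivity), ← rpow_natCast x k, ← rpow_mul hx, mul_comm]

lemma summable_pow_div_factorial_rpow {α : ℝ} (hα : 0 < α) {s : ℝ} (hs : 0 < s) :
    Summable fun k : ℕ => s ^ k / (k ! : ℝ) ^ α := by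
  have hratio (k : ℕ) : ‖s ^ (k + 1) / ((k + 1)! : ℝ) ^ α‖ / ‖s ^ k / (k ! : ℝ) ^ α‖ =
      s * ((k : ℝ) + 1) ^ (-α) := by
    have hk : (0 : ℝ) < k + 1 := by positivity
    have hfac : ((k + 1)! : ℝ) ^ α = ((k : ℝ) + 1) ^ α * (k ! : ℝ) ^ α := by
      rw [Nat.factorial_succ, Nat.cast_mul, Nat.cast_succ, mul_rpow hk.le (by positivity)]
    rw [norm_of_nonneg (by positivity), norm_of_nonneg (by positivity), hfac, rpow_neg hk.le]
    field_simp
    ring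
  refine summable_of_ratio_test_tendsto_lt_one zero_lt_one
    (Eventually.of_forall fun k => by positivity) ?_
  simp_rw [hratio]
  simpa using ((tendsto_rpow_neg_atTop hα).comp
    (tendsto_atTop_add_const_right _ 1 tendsto_natCast_atTop_atTop)).const_mul s

lemma summable_natCast_add_mul_pow_div_factorial_rpow {α : ℝ} (hα : 0 < α) {s : ℝ} (hs : 0 < s)
    {b : ℝ} (hb : 0 ≤ b) :
    Summable fun k : ℕ => ((k : ℝ) + b) * s ^ k / (k ! : ℝ) ^ α := by
  refine .of_nonneg_of_le (fun k => by positivity) (fun k => ?_)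
    ((summable_pow_div_factorial_rpow hα (s := 2 * s) (by positivity)).mul_left (1 + b))
  have hk : (k : ℝ) ≤ 2 ^ k := by exact_mod_cast (Nat.lt_two_pow_self (n := k)).le
  have hb2 : b ≤ b * 2 ^ k := le_mul_of_one_le_right hb (one_le_pow₀ one_le_two)
  rw [← mul_div_assoc, mul_pow, ← mul_assoc]
  gcongr
  linarith

lemma hasDerivAt_exp_mul_pow_div_factorial_rpow (α : ℝ) (k : ℕ) {x : ℝ} (hx : 0 < x) :
    HasDerivAt (fun y => exp (-α * y) * (y ^ k / (k ! : ℝ)) ^ α)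
      (α * exp (-α * x) * (((k : ℝ) - x) * x ^ (α * k - 1) / (k ! : ℝ) ^ α)) x := by
  have hexp : HasDerivAt (fun y => exp (-α * y)) (exp (-α * x) * -α) x := by
    simpa using ((hasDerivAt_id x).const_mul (-α)).exp
  have hpow := (hasDerivAt_rpow_const (p := α * k) (Or.inl hx.ne')).div_const ((k ! : ℝ) ^ α)
  have heq : (fun y => exp (-α * y) * (y ^ k / (k ! : ℝ)) ^ α) =ᶠ[𝓝 x]
      fun y => exp (-α * y) * (y ^ (α * k) / (k ! : ℝ) ^ α) := by
    filter_upwards [Ioi_mem_nhds hx] with y hy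
    rw [pow_div_factorial_rpow hy.le]
  refine ((hexp.mul hpow).congr_of_eventuallyEq heq).congr_deriv ?_
  rw [rpow_sub_one hx.ne']
  field_simp
  ring

lemma norm_deriv_exp_mul_pow_div_factorial_rpow_le {α : ℝ} (hα : 0 < α) (k : ℕ) {a b x : ℝ}
    (ha : 0 < a) (hx : x ∈ Set.Ioo a b) :
    ‖α * exp (-α * x) * (((k : ℝ) - x) * x ^ (α * k - 1) / (k ! : ℝ) ^ α)‖ ≤
      α / a * (((k : ℝ) + b) * (b ^ α) ^ k / (k ! : ℝ) ^ α) := by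
  have hx0 : 0 < x := ha.trans hx.1
  have hb : 0 < b := hx0.trans hx.2
  have hexp : exp (-α * x) ≤ 1 := exp_le_one_iff.2 (by nlinarith)
  have hdist : |(k : ℝ) - x| ≤ k + b := by
    rw [abs_le]; constructor <;> linarith [hx.2, (Nat.cast_nonneg k : (0 : ℝ) ≤ k)]
  have hrpow : x ^ (α * k - 1) ≤ (b ^ α) ^ k / a := by
    rw [rpow_sub_one hx0.ne', ← rpow_natCast, ← rpow_mul hb.le]
    exact div_le_div₀ (rpow_nonneg hb.le _) (rpow_le_rpow hx0.le hx.2.le (by positivity)) ha hx.1.le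
  rw [norm_mul, norm_mul, norm_div, norm_mul, norm_of_nonneg hα.le, norm_of_nonneg (exp_pos _).le,
    Real.norm_eq_abs, norm_of_nonneg (rpow_nonneg hx0.le _),
    norm_of_nonneg (rpow_nonneg (Nat.cast_nonneg _) _)]
  calc α * exp (-α * x) * (|(k : ℝ) - x| * x ^ (α * k - 1) / (k ! : ℝ) ^ α)
      ≤ α * 1 * ((k + b) * ((b ^ α) ^ k / a) / (k ! : ℝ) ^ α) := by
        gcongr
    _ = α / a * (((k : ℝ) + b) * (b ^ α) ^ k / (k ! : ℝ) ^ α) := by ring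

/-- For every `α > 0` and `λ > 0`, `ψ(α,·) = e^{-α·} ∑_{k=0}^∞ (·^k/k!)^α` is
differentiable at `λ` with derivative
`ψ'_λ(α,λ) = α e^{-αλ} ∑_{k=0}^∞ (k − λ) λ^{αk−1}/(k!)^α`. -/
theorem psi_hasDerivAt (α : ℝ) (hα : 0 < α) (l : ℝ) (hl : 0 < l) :
    HasDerivAt (fun x : ℝ =>
        Real.exp (-α * x) * ∑' k : ℕ, (x ^ k / (Nat.factorial k : ℝ)) ^ α)
      (α * Real.exp (-α * l) *
        ∑' k : ℕ, ((k : ℝ) - l) * l ^ (α * (k : ℝ) - 1) / (Nat.factorial k : ℝ) ^ α)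
      l := by
  have hl_mem : l ∈ Set.Ioo (l / 2) (2 * l) := ⟨by linarith, by linarith⟩
  have hsum_at_l : Summable fun k : ℕ => exp (-α * l) * (l ^ k / (k ! : ℝ)) ^ α := by
    simp_rw [pow_div_factorial_rpow hl.le, rpow_mul hl.le, rpow_natCast]
    exact (summable_pow_div_factorial_rpow hα (rpow_pos_of_pos hl α)).mul_left _
  simp_rw [← tsum_mul_left]
  exact hasDerivAt_tsum_of_isPreconnected
    ((summable_natCast_add_mul_pow_div_factorial_rpow hα (rpow_pos_of_pos (by positivity) α)
      (by positivity)).mul_left _)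
    isOpen_Ioo isPreconnected_Ioo
    (fun k x hx => hasDerivAt_exp_mul_pow_div_factorial_rpow α k (by linarith [hx.1]))
    (fun k x hx => norm_deriv_exp_mul_pow_div_factorial_rpow_le hα k (by positivity) hx)
    hl_mem hsum_at_l hl_mem
end

section
/- For every λ > 0 and every α with 0 < α < 1, the inequality ∑_{k=1}^∞ λ^{αk−1} · k^{1−α} / ((k−1)!)^α ≥ ∑_{k=0}^∞ λ^{αk} / (k!)^α holds. -/
/-!
Write `a k = (l ^ k / k!) ^ α` for the right-hand terms and `t = (k + 1) / l`. Then the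
`k`-th left-hand term is `b k = a k * t ^ (1 - α)` and `a (k + 1) = a k * t⁻¹ ^ α`, so
weighted AM-GM in the form `t ^ α ≤ α t + (1 - α)` gives `a k ≤ α b k + (1 - α) a (k + 1)`.
Summing over `k`, `∑ a ≤ α ∑ b + (1 - α) (∑ a - a 0)`, hence `α ∑ a ≤ α ∑ b - (1 - α) a 0`.
Both series converge by the ratio test.
-/

open Filter Real Topology Nat

theorem tsum_le_tsum_of_le_add_shift {a b : ℕ → ℝ} {α : ℝ} (hα : 0 < α) (hα1 : α ≤ 1)
    (ha0 : 0 ≤ a 0) (ha : Summable a) (hb : Summable b)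
    (h : ∀ k, a k ≤ α * b k + (1 - α) * a (k + 1)) :
    ∑' k, a k ≤ ∑' k, b k := by
  have hshift : Summable fun k ↦ a (k + 1) := (summable_nat_add_iff 1).2 ha
  have hle : ∑' k, a k ≤ α * ∑' k, b k + (1 - α) * ∑' k, a (k + 1) := by
    rw [← tsum_mul_left, ← tsum_mul_left, ← (hb.mul_left α).tsum_add (hshift.mul_left _)]
    exact (ha.tsum_le_tsum h) ((hb.mul_left α).add (hshift.mul_left _))
  rw [ha.tsum_eq_zero_add] at hle ⊢
  nlinarith [mul_nonneg (sub_nonneg.2 hα1) ha0]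

theorem le_mul_rpow_add_mul_inv_rpow {x t α : ℝ} (hx : 0 ≤ x) (ht : 0 < t) (hα0 : 0 ≤ α)
    (hα1 : α ≤ 1) :
    x ≤ α * (x * t ^ (1 - α)) + (1 - α) * (x * t⁻¹ ^ α) := by
  have htα : 0 < t ^ α := rpow_pos_of_pos ht α
  have hamgm : t ^ α ≤ α * t + (1 - α) := by
    simpa using geom_mean_le_arith_mean2_weighted hα0 (sub_nonneg.2 hα1) ht.le zero_le_one
      (by ring)
  have hrhs : α * (x * t ^ (1 - α)) + (1 - α) * (x * t⁻¹ ^ α)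
      = x / t ^ α * (α * t + (1 - α)) := by
    rw [rpow_sub ht, rpow_one, inv_rpow ht.le]
    field_simp
  rw [hrhs, div_mul_eq_mul_div, le_div_iff₀ htα]
  exact mul_le_mul_of_nonneg_left hamgm hx

theorem summable_of_ratio_tendsto_zero {u : ℕ → ℝ} (hu : ∀ n, 0 < u n)
    (h : Tendsto (fun n ↦ u (n + 1) / u n) atTop (𝓝 0)) : Summable u := by
  refine summable_of_ratio_test_tendsto_lt_one zero_lt_one
    (Eventually.of_forall fun n ↦ (hu n).ne') ?_
  simpa only [norm_of_nonneg (hu _).le] using h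

theorem summable_rpow_mul_of_ratio_tendsto_zero {u : ℕ → ℝ} (hu : ∀ n, 0 < u n)
    (h : Tendsto (fun n ↦ u (n + 1) / u n) atTop (𝓝 0)) (s : ℝ) :
    Summable fun n : ℕ ↦ ((n : ℝ) + 1) ^ s * u n := by
  refine summable_of_ratio_tendsto_zero (fun n ↦ by have := hu n; positivity) ?_
  have hweight : Tendsto (fun n : ℕ ↦ (((n : ℝ) + 1 + 1) / ((n : ℝ) + 1)) ^ s) atTop (𝓝 1) := by
    have : Tendsto (fun n : ℕ ↦ ((n : ℝ) + 1 + 1) / ((n : ℝ) + 1)) atTop (𝓝 1) := by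
      have h1 := (tendsto_one_div_add_atTop_nhds_zero_nat (𝕜 := ℝ)).const_add 1
      rw [add_zero] at h1
      refine h1.congr fun n ↦ ?_
      field_simp
    simpa using this.rpow_const (Or.inl one_ne_zero)
  convert hweight.mul h using 1
  · funext n
    push_cast
    rw [div_rpow (by positivity) (by positivity)]
    have := hu n
    field_simp
  · simp

/-- The `α`-th power `(l ^ k / k!) ^ α` of the Poisson weight. -/
noncomputable def poissonPowWeight (l α : ℝ) (k : ℕ) : ℝ := l ^ (α * k) / (k ! : ℝ) ^ α

section poissonPowWeight

variable {l : ℝ} (α : ℝ)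

theorem poissonPowWeight_pos (hl : 0 < l) (k : ℕ) : 0 < poissonPowWeight l α k := by
  unfold poissonPowWeight
  have := k.factorial_pos
  positivity

theorem poissonPowWeight_succ (hl : 0 < l) (k : ℕ) :
    poissonPowWeight l α (k + 1) = poissonPowWeight l α k * (l / ((k : ℝ) + 1)) ^ α := by
  unfold poissonPowWeight
  have := k.factorial_pos
  rw [factorial_succ, div_rpow hl.le (by positivity), Nat.cast_mul, mul_rpow (by positivity)
    (by positivity)]
  push_cast
  rw [mul_add, mul_one, rpow_add hl]
  field_simp

theorem tendsto_poissonPowWeight_ratio (hl : 0 < l) (hα : 0 < α) :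
    Tendsto (fun k ↦ poissonPowWeight l α (k + 1) / poissonPowWeight l α k) atTop (𝓝 0) := by
  have hbase : Tendsto (fun k : ℕ ↦ l / ((k : ℝ) + 1)) atTop (𝓝 0) := by
    simpa [div_eq_mul_one_div l] using tendsto_one_div_add_atTop_nhds_zero_nat.const_mul l
  convert (hbase.rpow_const (Or.inr hα.le)).congr' ?_ using 1
  · rw [zero_rpow hα.ne']
  · refine Eventually.of_forall fun k ↦ ?_
    dsimp only
    rw [poissonPowWeight_succ α hl, mul_div_cancel_left₀ _ (poissonPowWeight_pos α hl k).ne']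

theorem summable_poissonPowWeight_mul_rpow (hl : 0 < l) (hα : 0 < α) (s : ℝ) :
    Summable fun k : ℕ ↦ poissonPowWeight l α k * (((k : ℝ) + 1) / l) ^ s := by
  have := (summable_rpow_mul_of_ratio_tendsto_zero (poissonPowWeight_pos α hl)
    (tendsto_poissonPowWeight_ratio α hl hα) s).div_const (l ^ s)
  refine this.congr fun k ↦ ?_
  rw [div_rpow (by positivity) hl.le]
  ring

end poissonPowWeight

/-- For every `λ > 0` and `0 < α < 1`,
`∑_{k=1}^∞ λ^{αk−1} k^{1−α}/((k−1)!)^α ≥ ∑_{k=0}^∞ λ^{αk}/(k!)^α`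
(the left-hand series is re-indexed by `k ↦ k+1`). -/
theorem poisson_byproduct_inequality_alpha_lt_one (l : ℝ) (hl : 0 < l)
    (α : ℝ) (hα : 0 < α) (hα1 : α < 1) :
    (∑' k : ℕ, l ^ (α * ((k : ℝ) + 1) - 1) * ((k : ℝ) + 1) ^ (1 - α)
        / (Nat.factorial k : ℝ) ^ α)
      ≥ ∑' k : ℕ, l ^ (α * (k : ℝ)) / (Nat.factorial k : ℝ) ^ α := by
  have hterm : ∀ k : ℕ, l ^ (α * ((k : ℝ) + 1) - 1) * ((k : ℝ) + 1) ^ (1 - α)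
      / (Nat.factorial k : ℝ) ^ α = poissonPowWeight l α k * (((k : ℝ) + 1) / l) ^ (1 - α) := by
    intro k
    unfold poissonPowWeight
    rw [div_rpow (by positivity) hl.le, show α * ((k : ℝ) + 1) - 1 = α * k - (1 - α) by ring,
      rpow_sub hl]
    ring
  simp_rw [hterm]
  change _ ≥ ∑' k, poissonPowWeight l α k
  refine tsum_le_tsum_of_le_add_shift hα hα1.le (poissonPowWeight_pos α hl 0).le
    (by simpa using summable_poissonPowWeight_mul_rpow α hl hα 0)
    (summable_poissonPowWeight_mul_rpow α hl hα (1 - α)) fun k ↦ ?_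
  have := le_mul_rpow_add_mul_inv_rpow (poissonPowWeight_pos α hl k).le
    (by positivity : 0 < ((k : ℝ) + 1) / l) hα.le hα1.le
  rwa [inv_div, ← poissonPowWeight_succ α hl] at this
end

section
/- The following limit inferior bound holds: liminf_{λ → ∞} e^{-λ} · (log λ)^{-1} · ∑_{k=1}^∞ λ^k · log(k+1) / k! ≥ 1, where log denotes the natural logarithm. -/
/-!
The tangent-line bounds `1 - 1/y ≤ log y ≤ y - 1` at `y = (k + 1)/λ`, weighted by `λ^k/k!` and
summed in closed form, give `e^λ log λ + 1 ≤ ∑ λ^k log (k + 1)/k! ≤ e^λ (log λ + 1/λ)`.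
Hence for `λ > 1` the normalized sum lies in `[1, 1 + 1/(λ log λ)]`, so it tends to `1`.
-/

open Filter Real Topology
open scoped Nat

namespace Real

lemma hasSum_pow_div_factorial (x : ℝ) : HasSum (fun k : ℕ => x ^ k / k !) (exp x) :=
  exp_eq_exp_ℝ ▸ NormedSpace.expSeries_div_hasSum_exp x

lemma hasSum_pow_succ_div_factorial_succ (x : ℝ) :
    HasSum (fun k : ℕ => x ^ (k + 1) / (k + 1)!) (exp x - 1) := by
  simpa using (hasSum_nat_add_iff' 1).2 (hasSum_pow_div_factorial x)

lemma hasSum_pow_mul_succ_div_factorial (x : ℝ) :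
    HasSum (fun k : ℕ => x ^ k * (k + 1) / k !) ((x + 1) * exp x) := by
  have hshift : HasSum (fun k : ℕ => x ^ (k + 1) * (k + 1 : ℕ) / (k + 1)!) (x * exp x) := by
    refine ((hasSum_pow_div_factorial x).mul_left x).congr_fun fun k => ?_
    rw [Nat.factorial_succ]
    push_cast
    field_simp
    ring
  have hk : HasSum (fun k : ℕ => x ^ k * k / k !) (x * exp x) := by
    simpa using (hasSum_nat_add_iff' 1).1 (by simpa using hshift)
  rw [add_mul, one_mul]
  exact (hk.add (hasSum_pow_div_factorial x)).congr_fun fun k => by ring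

variable {x y : ℝ}

lemma log_add_one_sub_div_le_log (hx : 0 < x) (hy : 0 < y) : log x + 1 - x / y ≤ log y := by
  have := one_sub_inv_le_log_of_pos (div_pos hy hx)
  rw [inv_div, log_div hy.ne' hx.ne'] at this
  linarith

lemma log_le_log_add_div_sub_one (hx : 0 < x) (hy : 0 < y) : log y ≤ log x + y / x - 1 := by
  have := log_le_sub_one_of_pos (div_pos hy hx)
  rw [log_div hy.ne' hx.ne'] at this
  linarith

end Real

section PoissonLogSeries

variable {x : ℝ}

lemma hasSum_pow_div_factorial_mul_log_add_one_sub (x : ℝ) :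
    HasSum (fun k : ℕ => x ^ k / k ! * (log x + 1 - x / (k + 1))) (exp x * log x + 1) := by
  have h := ((hasSum_pow_div_factorial x).mul_right (log x + 1)).sub
    (hasSum_pow_succ_div_factorial_succ x)
  rw [show exp x * (log x + 1) - (exp x - 1) = exp x * log x + 1 by ring] at h
  refine h.congr_fun fun k => ?_
  rw [Nat.factorial_succ]
  push_cast
  field_simp
  ring

lemma hasSum_pow_div_factorial_mul_log_add_div_sub_one (hx : x ≠ 0) :
    HasSum (fun k : ℕ => x ^ k / k ! * (log x + (k + 1) / x - 1)) (exp x * (log x + x⁻¹)) := by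
  have h := ((hasSum_pow_div_factorial x).mul_right (log x - 1)).add
    ((hasSum_pow_mul_succ_div_factorial x).div_const x)
  rw [show exp x * (log x - 1) + (x + 1) * exp x / x = exp x * (log x + x⁻¹) by
    field_simp; ring] at h
  exact h.congr_fun fun k => by ring

lemma pow_div_factorial_mul_log_add_one_sub_le (hx : 0 < x) (k : ℕ) :
    x ^ k / k ! * (log x + 1 - x / (k + 1)) ≤ x ^ k * log ((k : ℝ) + 1) / k ! := by
  rw [mul_div_right_comm]
  gcongr
  exact log_add_one_sub_div_le_log hx (by positivity)

lemma pow_mul_log_succ_div_factorial_le (hx : 0 < x) (k : ℕ) :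
    x ^ k * log ((k : ℝ) + 1) / k ! ≤ x ^ k / k ! * (log x + (k + 1) / x - 1) := by
  rw [mul_div_right_comm]
  gcongr
  exact log_le_log_add_div_sub_one hx (by positivity)

lemma summable_pow_mul_log_succ_div_factorial (hx : 0 < x) :
    Summable fun k : ℕ => x ^ k * log ((k : ℝ) + 1) / k ! := by
  refine .of_nonneg_of_le (fun k => ?_) (pow_mul_log_succ_div_factorial_le hx)
    (hasSum_pow_div_factorial_mul_log_add_div_sub_one hx.ne').summable
  have : 0 ≤ log ((k : ℝ) + 1) := log_nonneg (by simp)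
  positivity

lemma exp_mul_log_add_one_le_tsum (hx : 0 < x) :
    exp x * log x + 1 ≤ ∑' k : ℕ, x ^ k * log ((k : ℝ) + 1) / k ! :=
  hasSum_le (pow_div_factorial_mul_log_add_one_sub_le hx)
    (hasSum_pow_div_factorial_mul_log_add_one_sub x)
    (summable_pow_mul_log_succ_div_factorial hx).hasSum

lemma tsum_le_exp_mul_log_add_inv (hx : 0 < x) :
    ∑' k : ℕ, x ^ k * log ((k : ℝ) + 1) / k ! ≤ exp x * (log x + x⁻¹) :=
  hasSum_le (pow_mul_log_succ_div_factorial_le hx)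
    (summable_pow_mul_log_succ_div_factorial hx).hasSum
    (hasSum_pow_div_factorial_mul_log_add_div_sub_one hx.ne')

lemma one_le_exp_neg_mul_inv_log_mul_tsum (hx : 1 < x) :
    1 ≤ exp (-x) * (log x)⁻¹ * ∑' k : ℕ, x ^ k * log ((k : ℝ) + 1) / k ! := by
  have hlog := log_pos hx
  calc 1 = exp (-x) * (log x)⁻¹ * (exp x * log x) := by rw [exp_neg]; field_simp
    _ ≤ _ := by
      gcongr
      linarith [exp_mul_log_add_one_le_tsum (zero_lt_one.trans hx)]

lemma exp_neg_mul_inv_log_mul_tsum_le (hx : 1 < x) :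
    exp (-x) * (log x)⁻¹ * ∑' k : ℕ, x ^ k * log ((k : ℝ) + 1) / k ! ≤ 1 + (x * log x)⁻¹ := by
  have hlog := log_pos hx
  calc _ ≤ exp (-x) * (log x)⁻¹ * (exp x * (log x + x⁻¹)) := by
        gcongr
        exact tsum_le_exp_mul_log_add_inv (zero_lt_one.trans hx)
    _ = 1 + (x * log x)⁻¹ := by rw [exp_neg]; field_simp

theorem tendsto_exp_neg_mul_inv_log_mul_tsum :
    Tendsto (fun x : ℝ => exp (-x) * (log x)⁻¹ * ∑' k : ℕ, x ^ k * log ((k : ℝ) + 1) / k !)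
      atTop (𝓝 1) := by
  have hupper : Tendsto (fun x : ℝ => 1 + (x * log x)⁻¹) atTop (𝓝 1) := by
    simpa using (tendsto_id.atTop_mul_atTop₀ tendsto_log_atTop).inv_tendsto_atTop.const_add 1
  refine tendsto_of_tendsto_of_tendsto_of_le_of_le' tendsto_const_nhds hupper ?_ ?_ <;>
    filter_upwards [eventually_gt_atTop 1] with x hx
  exacts [one_le_exp_neg_mul_inv_log_mul_tsum hx, exp_neg_mul_inv_log_mul_tsum_le hx]

end PoissonLogSeries

/-- `liminf_{λ→∞} e^{-λ} (log λ)^{-1} ∑_{k=1}^∞ λ^k log(k+1)/k! ≥ 1`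
(the `k = 0` term of the series vanishes since `log 1 = 0`, so the sum over all `k ∈ ℕ`
equals the sum from `k = 1`). -/
theorem poisson_liminf_bound :
    1 ≤ Filter.liminf (fun l : ℝ =>
      Real.exp (-l) * (Real.log l)⁻¹ *
        ∑' k : ℕ, l ^ k * Real.log ((k : ℝ) + 1) / (Nat.factorial k : ℝ))
      Filter.atTop :=
  tendsto_exp_neg_mul_inv_log_mul_tsum.liminf_eq.ge
end

section
/- As λ → ∞, the quantity e^{-λ} · (log λ)^{-1} · ∑_{k=1}^{⌊λ/2⌋} λ^k · log(k+1) / k! tends to 0, where ⌊λ/2⌋ denotes the greatest integer not exceeding λ/2 and log denotes the natural logarithm. -/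
/-!
Since `k + 1 ≤ λ` in the range of summation, `log (k + 1) ≤ log λ` cancels the factor `(log λ)⁻¹`,
and what is left is `e^{-λ}` times the Poisson partial sum `∑_{k ≤ λ/2} λ^k / k!`. A Chernoff
bound controls that sum: `λ^k = 2^k (λ/2)^k ≤ 2^{λ/2} (λ/2)^k` for `k ≤ λ/2`, so it is at most
`2^{λ/2} e^{λ/2}`, and `e^{-λ} 2^{λ/2} e^{λ/2} = e^{-(1 - log 2) λ / 2} → 0`.
-/

open Filter Finset

lemma sum_range_pow_div_factorial_le {x c : ℝ} (hx : 0 ≤ x) (hc : 1 ≤ c) (n : ℕ) :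
    ∑ k ∈ range (n + 1), x ^ k / (k.factorial : ℝ) ≤ c ^ n * Real.exp (x / c) := by
  have hc0 : 0 < c := by linarith
  calc ∑ k ∈ range (n + 1), x ^ k / (k.factorial : ℝ)
      = ∑ k ∈ range (n + 1), c ^ k * ((x / c) ^ k / (k.factorial : ℝ)) := by
        refine sum_congr rfl fun k _ => ?_
        rw [div_pow, mul_div_assoc', mul_div_cancel₀ _ (pow_ne_zero k hc0.ne')]
    _ ≤ ∑ k ∈ range (n + 1), c ^ n * ((x / c) ^ k / (k.factorial : ℝ)) := by
        refine sum_le_sum fun k hk => ?_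
        gcongr
        exact Nat.lt_succ_iff.mp (mem_range.mp hk)
    _ = c ^ n * ∑ k ∈ range (n + 1), (x / c) ^ k / (k.factorial : ℝ) := (mul_sum ..).symm
    _ ≤ c ^ n * Real.exp (x / c) := by
        gcongr
        exact Real.sum_le_exp_of_nonneg (by positivity) _

lemma exp_neg_mul_sum_range_floor_half_le {l : ℝ} (hl : 0 ≤ l) :
    Real.exp (-l) * ∑ k ∈ range (⌊l / 2⌋₊ + 1), l ^ k / (k.factorial : ℝ)
      ≤ Real.exp (-((1 - Real.log 2) / 2 * l)) := by
  have hpow : (2 : ℝ) ^ ⌊l / 2⌋₊ ≤ Real.exp (Real.log 2 * (l / 2)) := by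
    rw [← Real.rpow_def_of_pos two_pos, ← Real.rpow_natCast]
    exact Real.rpow_le_rpow_of_exponent_le one_le_two (Nat.floor_le (by positivity))
  calc Real.exp (-l) * ∑ k ∈ range (⌊l / 2⌋₊ + 1), l ^ k / (k.factorial : ℝ)
      ≤ Real.exp (-l) * (2 ^ ⌊l / 2⌋₊ * Real.exp (l / 2)) := by
        gcongr
        exact sum_range_pow_div_factorial_le hl one_le_two _
    _ ≤ Real.exp (-l) * (Real.exp (Real.log 2 * (l / 2)) * Real.exp (l / 2)) := by gcongr
    _ = Real.exp (-((1 - Real.log 2) / 2 * l)) := by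
        rw [← Real.exp_add, ← Real.exp_add]
        ring_nf

lemma tendsto_exp_neg_mul_sum_range_floor_half :
    Tendsto (fun l : ℝ => Real.exp (-l) * ∑ k ∈ range (⌊l / 2⌋₊ + 1), l ^ k / (k.factorial : ℝ))
      atTop (nhds 0) := by
  have hrate : 0 < (1 - Real.log 2) / 2 := by linarith [Real.log_two_lt_d9]
  refine squeeze_zero' ?_ ?_
    (Real.tendsto_exp_neg_atTop_nhds_zero.comp (tendsto_id.const_mul_atTop hrate))
  · filter_upwards [eventually_ge_atTop 0] with l hl
    positivity
  · filter_upwards [eventually_ge_atTop 0] with l hl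
    exact exp_neg_mul_sum_range_floor_half_le hl

lemma sum_Icc_floor_half_log_le {l : ℝ} (hl : 2 ≤ l) :
    ∑ k ∈ Icc 1 ⌊l / 2⌋₊, l ^ k * Real.log ((k : ℝ) + 1) / (k.factorial : ℝ)
      ≤ Real.log l * ∑ k ∈ range (⌊l / 2⌋₊ + 1), l ^ k / (k.factorial : ℝ) := by
  have hl0 : 0 ≤ l := by linarith
  have hlogl : 0 ≤ Real.log l := Real.log_nonneg (by linarith)
  rw [mul_sum]
  calc ∑ k ∈ Icc 1 ⌊l / 2⌋₊, l ^ k * Real.log ((k : ℝ) + 1) / (k.factorial : ℝ)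
      ≤ ∑ k ∈ Icc 1 ⌊l / 2⌋₊, Real.log l * (l ^ k / (k.factorial : ℝ)) := by
        refine sum_le_sum fun k hk => ?_
        have hk : (k : ℝ) ≤ l / 2 :=
          (Nat.cast_le.mpr (mem_Icc.mp hk).2).trans (Nat.floor_le (by positivity))
        have hlog : Real.log ((k : ℝ) + 1) ≤ Real.log l :=
          Real.log_le_log (by positivity) (by linarith)
        rw [mul_comm (l ^ k), mul_div_assoc]
        gcongr
    _ ≤ ∑ k ∈ range (⌊l / 2⌋₊ + 1), Real.log l * (l ^ k / (k.factorial : ℝ)) := by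
        refine sum_le_sum_of_subset_of_nonneg (fun k hk => ?_) fun k _ _ => ?_
        · simp only [mem_Icc, mem_range] at hk ⊢
          omega
        · positivity

/-- As `λ → ∞`, `e^{-λ} (log λ)^{-1} ∑_{k=1}^{⌊λ/2⌋} λ^k log(k+1)/k! → 0`. -/
theorem poisson_lower_half_log_sum_tendsto_zero :
    Tendsto (fun l : ℝ =>
        Real.exp (-l) * (Real.log l)⁻¹ *
          ∑ k ∈ Finset.Icc 1 ⌊l / 2⌋₊, l ^ k * Real.log ((k : ℝ) + 1) / (Nat.factorial k : ℝ))
      atTop (nhds 0) := by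
  refine squeeze_zero' ?_ ?_ tendsto_exp_neg_mul_sum_range_floor_half
  · filter_upwards [eventually_ge_atTop 1] with l hl
    have := Real.log_nonneg hl
    refine mul_nonneg (by positivity) (sum_nonneg fun k _ => ?_)
    have := Real.log_nonneg (by linarith [k.cast_nonneg (α := ℝ)] : (1 : ℝ) ≤ k + 1)
    positivity
  · filter_upwards [eventually_ge_atTop 2] with l hl
    have hlog : 0 < Real.log l := Real.log_pos (by linarith)
    calc Real.exp (-l) * (Real.log l)⁻¹ *
          ∑ k ∈ Icc 1 ⌊l / 2⌋₊, l ^ k * Real.log ((k : ℝ) + 1) / (k.factorial : ℝ)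
        ≤ Real.exp (-l) * (Real.log l)⁻¹ *
          (Real.log l * ∑ k ∈ range (⌊l / 2⌋₊ + 1), l ^ k / (k.factorial : ℝ)) := by
          gcongr
          exact sum_Icc_floor_half_log_le hl
      _ = Real.exp (-l) * ∑ k ∈ range (⌊l / 2⌋₊ + 1), l ^ k / (k.factorial : ℝ) := by
          field_simp
end
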